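/- arXiv:1807.07397 — 2 statements merged into one kernel-verified Lean document; each statement's English description precedes it below -/
import Mathlib

section
/- The cosine matrix of type IV of size n is orthogonal and symmetric, i.e., C_n^IV = (C_n^IV)^T and C_n^IV (C_n^IV)^T = I_n. -/
open Matrix

/-- The cosine matrix of type II of size `n`. -/
noncomputable def CII (n : ℕ) : Matrix (Fin n) (Fin n) ℝ :=
  Matrix.of fun k l : Fin n =>
    Real.sqrt (2 / (n : ℝ)) * (if (k : ℕ) % n = 0 then 1 / Real.sqrt 2 else 1) *
      Real.cos ((k : ℕ) * (2 * (l : ℕ) + 1) * Real.pi / (2 * (n : ℝ)))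

/-- The cosine matrix of type IV of size `n`. -/
noncomputable def CIV (n : ℕ) : Matrix (Fin n) (Fin n) ℝ :=
  Matrix.of fun k l : Fin n =>
    Real.sqrt (2 / (n : ℝ)) *
      Real.cos ((2 * (k : ℕ) + 1) * (2 * (l : ℕ) + 1) * Real.pi / (4 * (n : ℝ)))

/-!
Writing `C = CIV n`, the product-to-sum formula turns `(C * Cᵀ) k l` into `1 / n` times
`∑ j < n, cos ((2j+1) (k-l) π / 2n) + cos ((2j+1) (k+l+1) π / 2n)`. Multiplying a sum
`∑ j < n, cos ((2j+1) θ)` by `2 sin θ` telescopes to `sin (2nθ)`, so the sum vanishes whenever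
`θ = m π / 2n` with `m` an integer not divisible by `2n`. This kills both sums unless `k = l`,
in which case the first sum is `n`.
-/

open Finset Real

theorem two_mul_sin_mul_sum_range_cos_odd_mul (θ : ℝ) (n : ℕ) :
    2 * sin θ * ∑ j ∈ range n, cos ((2 * j + 1) * θ) = sin (2 * n * θ) := by
  have telescope (j : ℕ) : 2 * sin θ * cos ((2 * j + 1) * θ)
      = sin (2 * (j + 1 : ℕ) * θ) - sin (2 * j * θ) := by
    rw [two_mul_sin_mul_cos]
    push_cast
    ring_nf
    rw [sin_neg]
    ring
  rw [mul_sum, sum_congr rfl fun j _ => telescope j]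
  exact (sum_range_sub (fun i : ℕ => sin (2 * i * θ)) n).trans (by simp)

theorem sum_range_cos_odd_mul_eq_zero {θ : ℝ} (n : ℕ) (hθ : sin θ ≠ 0)
    (hnθ : sin (2 * n * θ) = 0) : ∑ j ∈ range n, cos ((2 * j + 1) * θ) = 0 := by
  have h := two_mul_sin_mul_sum_range_cos_odd_mul θ n
  rw [hnθ] at h
  exact (mul_eq_zero.mp h).resolve_left (mul_ne_zero two_ne_zero hθ)

theorem sum_range_cos_odd_mul_int_mul_pi_div_eq_zero (n : ℕ) {m : ℤ} (hm : ¬ 2 * (n : ℤ) ∣ m) :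
    ∑ j ∈ range n, cos ((2 * j + 1) * (m * π / (2 * n))) = 0 := by
  rcases n.eq_zero_or_pos with rfl | hn
  · simp
  have hn' : (n : ℝ) ≠ 0 := by positivity
  apply sum_range_cos_odd_mul_eq_zero
  · refine sin_ne_zero_iff.mpr fun k hk => hm ⟨k, ?_⟩
    field_simp at hk
    exact_mod_cast (show (m : ℝ) = 2 * n * k by linear_combination -hk)
  · rw [show 2 * (n : ℝ) * (m * π / (2 * n)) = m * π by field_simp]
    exact sin_int_mul_pi m

theorem CIV_transpose (n : ℕ) : (CIV n)ᵀ = CIV n := by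
  ext k l
  simp only [CIV, transpose_apply, of_apply]
  ring_nf

theorem CIV_mul_transpose_apply (n : ℕ) (k l : Fin n) :
    (CIV n * (CIV n)ᵀ) k l =
      (∑ j ∈ range n, cos ((2 * j + 1) * ((k - l : ℤ) * π / (2 * n))) +
        ∑ j ∈ range n, cos ((2 * j + 1) * ((k + l + 1 : ℤ) * π / (2 * n)))) / n := by
  have hn : (n : ℝ) ≠ 0 := by have := k.pos; positivity
  have hsqrt : sqrt (2 / n) * sqrt (2 / n) = 2 / n := mul_self_sqrt (by positivity)
  rw [mul_apply, ← sum_add_distrib, sum_div, ← Fin.sum_univ_eq_sum_range]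
  refine sum_congr rfl fun j _ => ?_
  simp only [CIV, transpose_apply, of_apply]
  set a := (2 * (k : ℕ) + 1) * (2 * (j : ℕ) + 1) * π / (4 * (n : ℝ)) with ha
  set b := (2 * (l : ℕ) + 1) * (2 * (j : ℕ) + 1) * π / (4 * (n : ℝ)) with hb
  have hsub : (2 * (j : ℕ) + 1) * ((k - l : ℤ) * π / (2 * n)) = a - b := by
    rw [ha, hb]; push_cast; field_simp; ring
  have hadd : (2 * (j : ℕ) + 1) * ((k + l + 1 : ℤ) * π / (2 * n)) = a + b := by
    rw [ha, hb]; push_cast; field_simp; ring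
  rw [hsub, hadd, ← two_mul_cos_mul_cos]
  linear_combination cos a * cos b * hsqrt

theorem CIV_symm_and_orthogonal_general (n : ℕ) :
    CIV n = (CIV n)ᵀ ∧ CIV n * (CIV n)ᵀ = 1 := by
  refine ⟨(CIV_transpose n).symm, ?_⟩
  ext k l
  have hk := k.isLt
  have hl := l.isLt
  have hsum : ∑ j ∈ range n, cos ((2 * j + 1) * ((k + l + 1 : ℤ) * π / (2 * n))) = 0 :=
    sum_range_cos_odd_mul_int_mul_pi_div_eq_zero n fun h =>
      absurd (Int.eq_zero_of_abs_lt_dvd h (by rw [abs_lt]; omega)) (by omega)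
  rw [CIV_mul_transpose_apply, hsum, one_apply]
  split_ifs with hkl
  · subst hkl
    simp [k.pos.ne']
  · have hdiff : ∑ j ∈ range n, cos ((2 * j + 1) * ((k - l : ℤ) * π / (2 * n))) = 0 :=
      sum_range_cos_odd_mul_int_mul_pi_div_eq_zero n fun h =>
        hkl (Fin.ext (by have := Int.eq_zero_of_abs_lt_dvd h (by rw [abs_lt]; omega); omega))
    rw [hdiff, add_zero, zero_div]

theorem CIV_symm_and_orthogonal (n : ℕ) (hn : 0 < n) :
    CIV n = (CIV n)ᵀ ∧ CIV n * (CIV n)ᵀ = 1 :=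
  CIV_symm_and_orthogonal_general n
end

section
/- Let N = 2^J, x ∈ ℝ^N, and 0 ≤ j ≤ J−1. Writing x^{(j+1)} for the reflected periodization at level j+1 and x^{(j)} for that at level j, the oddly indexed entries of the DCT-II of x^{(j+1)} satisfy ((x^{(j+1)})^II_{2k+1})_{k=0}^{2^j−1} = (1/√2) · C_{2^j}^IV (2 x^{(j+1)}_{(0)} − x^{(j)}). -/
open Matrix

/-- One step of reflected periodization: add the first half and the reflected second half. -/
noncomputable def halfSum (n : ℕ) (x : Fin (2 * n) → ℝ) : Fin n → ℝ :=
  fun k => x ⟨(k : ℕ), by have := k.isLt; omega⟩ +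
           x ⟨2 * n - 1 - (k : ℕ), by have := k.isLt; omega⟩

/-- Iterated reflected periodization, peeling off `s` halving steps. -/
noncomputable def perAux (j : ℕ) : (s : ℕ) → (Fin (2 ^ (j + s)) → ℝ) → Fin (2 ^ j) → ℝ
  | 0, x => x
  | s + 1, x => perAux j s (halfSum (2 ^ (j + s))
      (fun k => x (Fin.cast (by
        have h1 : j + (s + 1) = (j + s) + 1 := by omega
        rw [h1, pow_succ]; ring) k)))

/-- The reflected periodization `x^{(j)}` of `x ∈ ℝ^{2^J}`. -/
noncomputable def reflPer (J j : ℕ) (h : j ≤ J) (x : Fin (2 ^ J) → ℝ) : Fin (2 ^ j) → ℝ :=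
  perAux j (J - j) (fun k => x (Fin.cast (by rw [Nat.add_sub_cancel' h]) k))

/-!
Pair the columns `l` and `2n - 1 - l` of the DCT-II matrix of size `2n`. In an odd row `2k + 1` the two
cosine arguments add up to `(2k + 1)π`, so the entries are opposite, and the first equals `1/√2` times
the DCT-IV entry `(k, l)` of size `n`. Hence the odd outputs of the DCT-II of `y` are `1/√2` times the
DCT-IV of `l ↦ y_l - y_{2n-1-l}`, and with `y = x^{(j+1)}` this is `2 y_l - x^{(j)}_l`, because one
periodization step reads `x^{(j)}_l = y_l + y_{2n-1-l}`.
-/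

open Real

lemma halfSum_cast {a b : ℕ} (h : b = a) (x : Fin (2 * a) → ℝ) (m : Fin b) :
    halfSum a x (Fin.cast h m) = halfSum b (fun t => x (Fin.cast (by rw [h]) t)) m := by
  subst h; rfl

lemma perAux_cast (j : ℕ) {s t : ℕ} (h : s = t) (x : Fin (2 ^ (j + s)) → ℝ) (k : Fin (2 ^ j)) :
    perAux j s x k = perAux j t (fun m => x (Fin.cast (by rw [h]) m)) k := by
  subst h; rfl

/-- `perAux` halves at the top level by definition; this peels off the bottom level instead. -/
lemma perAux_succ (j s : ℕ) (x : Fin (2 ^ (j + (s + 1))) → ℝ) (k : Fin (2 ^ j)) :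
    perAux j (s + 1) x k =
      perAux (j + 1) s (fun m => x (Fin.cast (by congr 1; omega) m))
          ⟨k, by have := k.isLt; rw [pow_succ]; omega⟩ +
      perAux (j + 1) s (fun m => x (Fin.cast (by congr 1; omega) m))
          ⟨2 ^ (j + 1) - 1 - k, by have := k.isLt; rw [pow_succ]; omega⟩ := by
  induction s with
  | zero =>
    simp only [perAux, halfSum]
    congr 2
    ext
    simp only [Fin.val_cast, Nat.add_zero, pow_succ]
    omega
  | succ s ih =>
    show perAux j (s + 1) (halfSum (2 ^ (j + (s + 1))) _) k = _
    rw [ih]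
    congr 2 <;>
    · funext m
      rw [halfSum_cast (by congr 1; omega)]
      rfl

lemma reflPer_succ (J j : ℕ) (h : j + 1 ≤ J) (x : Fin (2 ^ J) → ℝ) (k : Fin (2 ^ j)) :
    reflPer J j (Nat.le_of_succ_le h) x k =
      reflPer J (j + 1) h x ⟨k, by have := k.isLt; rw [pow_succ]; omega⟩ +
      reflPer J (j + 1) h x ⟨2 ^ (j + 1) - 1 - k, by have := k.isLt; rw [pow_succ]; omega⟩ := by
  unfold reflPer
  rw [perAux_cast j (show J - j = J - (j + 1) + 1 by omega), perAux_succ]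
  rfl

lemma Fin.sum_univ_two_mul_eq_sum_add_rev {M : Type*} [AddCommMonoid M] (n : ℕ)
    (f : Fin (2 * n) → M) :
    ∑ i, f i = ∑ i : Fin n, (f ⟨i, by omega⟩ + f ⟨2 * n - 1 - i, by omega⟩) := by
  set g : ℕ → M := fun i => if h : i < 2 * n then f ⟨i, h⟩ else 0
  have hg : ∀ i (h : i < 2 * n), f ⟨i, h⟩ = g i := fun i h => by simp [g, h]
  simp only [hg, Fin.sum_univ_eq_sum_range g, Fin.sum_univ_eq_sum_range
    (fun i => g i + g (2 * n - 1 - i))]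
  rw [two_mul, Finset.sum_range_add, ← Finset.sum_range_reflect (fun i => g (n + i)) n,
    ← Finset.sum_add_distrib]
  refine Finset.sum_congr rfl fun i hi => ?_
  rw [Finset.mem_range] at hi
  congr 2
  omega

lemma Real.cos_odd_mul_pi_sub (K : ℕ) (θ : ℝ) :
    cos ((2 * K + 1) * π - θ) = -cos θ := by
  rw [show (2 * K + 1) * π - θ = π - θ + K * (2 * π) by ring, cos_add_nat_mul_two_pi, cos_pi_sub]

lemma sqrt_two_div_two_mul (n : ℕ) :
    √(2 / ((2 * n : ℕ) : ℝ)) = 1 / √2 * √(2 / (n : ℝ)) := by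
  rw [show (2 : ℝ) / ((2 * n : ℕ) : ℝ) = 2 / n / 2 by push_cast; ring, Real.sqrt_div' _ zero_le_two]
  ring

lemma CII_odd_row (n : ℕ) (k l : Fin n) :
    CII (2 * n) ⟨2 * k + 1, by omega⟩ ⟨l, by omega⟩ = 1 / √2 * CIV n k l := by
  have hrow : (2 * (k : ℕ) + 1) % (2 * n) ≠ 0 := by rw [Nat.mod_eq_of_lt (by omega)]; omega
  simp only [CII, CIV, Matrix.of_apply, hrow, if_false, mul_one, sqrt_two_div_two_mul]
  rw [mul_assoc]
  congr 3
  push_cast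
  ring

lemma CII_odd_row_rev (n : ℕ) (k l : Fin n) :
    CII (2 * n) ⟨2 * k + 1, by omega⟩ ⟨2 * n - 1 - l, by omega⟩ = -(1 / √2 * CIV n k l) := by
  have hrow : (2 * (k : ℕ) + 1) % (2 * n) ≠ 0 := by rw [Nat.mod_eq_of_lt (by omega)]; omega
  have hn : (n : ℝ) ≠ 0 := by have := k.pos; positivity
  have hl : ((2 * n - 1 - l : ℕ) : ℝ) = 2 * n - 1 - l := by
    rw [Nat.sub_sub, Nat.cast_sub (by omega)]; push_cast; ring
  have harg :
      ((2 * k + 1 : ℕ) : ℝ) * (2 * ((2 * n - 1 - l : ℕ) : ℝ) + 1) * π / (2 * ((2 * n : ℕ) : ℝ)) =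
        (2 * k + 1) * π - (2 * k + 1) * (2 * l + 1) * π / (4 * n) := by
    rw [hl]; push_cast; field_simp; ring
  simp only [CII, CIV, Matrix.of_apply, hrow, if_false, mul_one, sqrt_two_div_two_mul]
  rw [harg, cos_odd_mul_pi_sub]
  ring

theorem CII_mulVec_odd (n N : ℕ) (hN : N = 2 * n) (y : Fin N → ℝ) (k : Fin n) :
    (CII N *ᵥ y) ⟨2 * k + 1, by omega⟩ =
      1 / √2 * (CIV n *ᵥ fun l => y ⟨l, by omega⟩ - y ⟨N - 1 - l, by omega⟩) k := by
  subst hN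
  simp only [Matrix.mulVec, dotProduct, Fin.sum_univ_two_mul_eq_sum_add_rev, CII_odd_row,
    CII_odd_row_rev, Finset.mul_sum]
  refine Finset.sum_congr rfl fun l _ => ?_
  ring

theorem odd_dctII_entries (J j : ℕ) (hJ : j + 1 ≤ J) (x : Fin (2 ^ J) → ℝ)
    (k : Fin (2 ^ j)) :
    (CII (2 ^ (j + 1))).mulVec (reflPer J (j + 1) hJ x)
        ⟨2 * (k : ℕ) + 1, by
          have hk := k.isLt
          have h2 : 2 ^ (j + 1) = 2 * 2 ^ j := by rw [pow_succ]; ring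
          omega⟩ =
      (1 / Real.sqrt 2) *
        (CIV (2 ^ j)).mulVec
          (fun l : Fin (2 ^ j) =>
            2 * reflPer J (j + 1) hJ x
                ⟨(l : ℕ), by
                  have hl := l.isLt
                  have h2 : 2 ^ (j + 1) = 2 * 2 ^ j := by rw [pow_succ]; ring
                  omega⟩ -
              reflPer J j (le_trans (Nat.le_succ j) hJ) x l) k := by
  rw [CII_mulVec_odd (2 ^ j) (2 ^ (j + 1)) (pow_succ' 2 j)]
  congr 2
  funext l
  rw [reflPer_succ J j hJ]
  ring
end
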